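/- Let (B, +, ∘) be a left semi-brace such that c + a ∘ (0 + b) = c + a ∘ b for all a, b, c ∈ B (equivalently, ρ is an anti-homomorphism). Then condition a + λ_b(c) ∘ (0 + ρ_c(b)) = a + b ∘ (0 + c) holds for all a, b, c ∈ B, and hence the associated map r_B is a set-theoretical solution of the Yang–Baxter equation. -/

import Mathlib

/-- A left semi-brace: a semigroup operation `add` together with a group
structure `∘` (the multiplication of the `Group` instance) satisfying
`a ∘ (b + c) = a ∘ b + a ∘ (a⁻¹ + c)`. -/
structure IsLeftSemiBrace (B : Type*) [Group B] (add : B → B → B) : Prop where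
  add_assoc : ∀ a b c : B, add (add a b) c = add a (add b c)
  semibrace : ∀ a b c : B, a * add b c = add (a * b) (a * add a⁻¹ c)

/-- The map `r` acting on the first and second components of a triple. -/
def R12 {X : Type*} (r : X × X → X × X) : X × X × X → X × X × X :=
  fun p => ((r (p.1, p.2.1)).1, (r (p.1, p.2.1)).2, p.2.2)

/-- The map `r` acting on the second and third components of a triple. -/
def R23 {X : Type*} (r : X × X → X × X) : X × X × X → X × X × X :=
  fun p => (p.1, (r (p.2.1, p.2.2)).1, (r (p.2.1, p.2.2)).2)

/-- `r` is a set-theoretical solution of the Yang-Baxter equation. -/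
def IsYBE {X : Type*} (r : X × X → X × X) : Prop :=
  R12 r ∘ R23 r ∘ R12 r = R23 r ∘ R12 r ∘ R23 r

/-!
The maps `λ_a` form a left action of `(B, ∘)` by endomorphisms of `(B, +)`, and
`λ_a(b) ∘ ρ_b(a) = a ∘ b`. The hypothesis lets one replace `x ∘ (0 + y)` by `x ∘ y`
behind any left summand, which gives the first claim at once. Since `λ_a(X) = a ∘ (a⁻ + X)`,
`λ_a` cannot distinguish `X` from `Y` when `a⁻ + X = a⁻ + Y`; expanding both sides of the
second braid relation with `x ∘ λ_y(z) = x + λ_{x ∘ y}(z)` reduces it to the first claim under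
`λ_a`. The third braid relation is then free, because both sides of the braid equation
preserve the product `a ∘ b ∘ c` of a triple.
-/

theorem mul_R12_of_mul {M : Type*} [Monoid M] {r : M × M → M × M}
    (hr : ∀ p, (r p).1 * (r p).2 = p.1 * p.2) (p : M × M × M) :
    (R12 r p).1 * (R12 r p).2.1 * (R12 r p).2.2 = p.1 * p.2.1 * p.2.2 := by
  simp only [R12, hr]

theorem mul_R23_of_mul {M : Type*} [Monoid M] {r : M × M → M × M}
    (hr : ∀ p, (r p).1 * (r p).2 = p.1 * p.2) (p : M × M × M) :
    (R23 r p).1 * (R23 r p).2.1 * (R23 r p).2.2 = p.1 * p.2.1 * p.2.2 := by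
  simp only [R23, mul_assoc, hr]

theorem isYBE_of_mul {M : Type*} [LeftCancelMonoid M] {r : M × M → M × M}
    (hr : ∀ p, (r p).1 * (r p).2 = p.1 * p.2)
    (h₁ : ∀ p, (R12 r (R23 r (R12 r p))).1 = (R23 r (R12 r (R23 r p))).1)
    (h₂ : ∀ p, (R12 r (R23 r (R12 r p))).2.1 = (R23 r (R12 r (R23 r p))).2.1) :
    IsYBE r := by
  funext p
  have h₃ : (R12 r (R23 r (R12 r p))).1 * (R12 r (R23 r (R12 r p))).2.1 *
      (R12 r (R23 r (R12 r p))).2.2 = (R23 r (R12 r (R23 r p))).1 *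
      (R23 r (R12 r (R23 r p))).2.1 * (R23 r (R12 r (R23 r p))).2.2 := by
    simp only [mul_R12_of_mul hr, mul_R23_of_mul hr]
  rw [h₁, h₂] at h₃
  exact Prod.ext (h₁ p) (Prod.ext (h₂ p) (mul_left_cancel h₃))

namespace IsLeftSemiBrace

variable {B : Type*} [Group B] {add : B → B → B}

def lam (add : B → B → B) (a b : B) : B := a * add a⁻¹ b

def rho (add : B → B → B) (b a : B) : B := (add a⁻¹ b)⁻¹ * b

theorem lam_mul_rho (a b : B) : lam add a b * rho add b a = a * b := by
  simp only [lam, rho, mul_assoc, mul_inv_cancel_left]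

theorem lam_congr {a x y : B} (hxy : add a⁻¹ x = add a⁻¹ y) : lam add a x = lam add a y := by
  rw [lam, hxy, lam]

theorem mul_add_eq (h : IsLeftSemiBrace B add) (x y z : B) :
    x * add y z = add (x * y) (lam add x z) :=
  h.semibrace x y z

theorem mul_one_add (h : IsLeftSemiBrace B add) (x y : B) :
    x * add 1 y = add x (lam add x y) := by
  rw [h.mul_add_eq, mul_one]

theorem lam_mul (h : IsLeftSemiBrace B add) (a b c : B) :
    lam add (a * b) c = lam add a (lam add b c) := by
  rw [lam, lam, lam, mul_inv_rev, mul_assoc, h.mul_add_eq b, mul_inv_cancel_left]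
  rfl

theorem lam_add (h : IsLeftSemiBrace B add) (a x y : B) :
    lam add a (add x y) = add (lam add a x) (lam add a y) := by
  simp only [lam]
  rw [← h.add_assoc, h.semibrace]

theorem mul_lam (h : IsLeftSemiBrace B add) (x y z : B) :
    x * lam add y z = add x (lam add (x * y) z) := by
  have hy : y⁻¹ = (x * y)⁻¹ * x := by group
  rw [lam, hy, ← mul_assoc, h.mul_add_eq, mul_inv_cancel_left]

theorem add_lam_mul_one_add_rho
    (hanti : ∀ a b c : B, add c (a * add 1 b) = add c (a * b)) (a b c : B) :
    add a (lam add b c * add 1 (rho add c b)) = add a (b * add 1 c) := by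
  rw [hanti, lam_mul_rho, hanti]

theorem lam_lam_rho (h : IsLeftSemiBrace B add) (a b c : B) :
    lam add (lam add a b) (lam add (rho add b a) c) = lam add (a * b) c := by
  rw [← h.lam_mul, lam_mul_rho]

theorem rho_lam_rho (h : IsLeftSemiBrace B add)
    (hanti : ∀ a b c : B, add c (a * add 1 b) = add c (a * b)) (a b c : B) :
    rho add (lam add (rho add b a) c) (lam add a b) =
      lam add (rho add (lam add b c) a) (rho add c b) := by
  apply mul_left_cancel (a := lam add (a * b) c)
  calc lam add (a * b) c * rho add (lam add (rho add b a) c) (lam add a b)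
      = lam add a b * lam add (rho add b a) c := by
        rw [← h.lam_lam_rho, lam_mul_rho]
    _ = lam add a (add b (lam add b c)) := by
        rw [h.mul_lam, lam_mul_rho, h.lam_add, h.lam_mul]
    _ = lam add a (add (lam add b c) (lam add (lam add b c) (rho add c b))) := by
        refine lam_congr ?_
        rw [← h.mul_one_add, ← h.mul_one_add, add_lam_mul_one_add_rho hanti]
    _ = lam add (a * b) c * lam add (rho add (lam add b c) a) (rho add c b) := by
        rw [h.mul_lam, h.lam_mul a b, lam_mul_rho, h.lam_add, h.lam_mul]

end IsLeftSemiBrace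

theorem stmt14 {B : Type*} [Group B] (add : B → B → B)
    (h : IsLeftSemiBrace B add)
    (hanti : ∀ a b c : B, add c (a * add 1 b) = add c (a * b)) :
    letI lam : B → B → B := fun x y => x * add x⁻¹ y
    letI rho : B → B → B := fun y x => (add x⁻¹ y)⁻¹ * y
    (∀ a b c : B, add a (lam b c * add 1 (rho c b)) = add a (b * add 1 c)) ∧
      IsYBE (fun p : B × B => (lam p.1 p.2, rho p.2 p.1)) :=
  ⟨IsLeftSemiBrace.add_lam_mul_one_add_rho hanti,
    isYBE_of_mul (fun p => IsLeftSemiBrace.lam_mul_rho p.1 p.2)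
      (fun _ => (h.lam_lam_rho _ _ _).trans (h.lam_mul _ _ _))
      (fun _ => h.rho_lam_rho hanti _ _ _)⟩
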